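/- Fix θ ∈ ℝ. Define a bilinear antisymmetric bracket on the real vector space with basis e₁,…,e₅ by: [e₁,e₂] = −(4/5)θe₄ − 4e₅, [e₁,e₄] = 2e₂, [e₁,e₅] = (2/5)θe₂ − 20e₄, [e₂,e₃] = −2e₂, [e₃,e₄] = 2e₄, [e₃,e₅] = 2e₅, and [e₁,e₃] = [e₂,e₄] = [e₂,e₅] = [e₄,e₅] = 0. Then this bracket satisfies the Jacobi identity, so it defines a 5-dimensional real Lie algebra 𝔤_θ. Moreover the derived series of 𝔤_θ has dimensions 5, 3, 0: the derived algebra [𝔤_θ,𝔤_θ] equals span(e₂,e₄,e₅), and the second derived algebra is zero. Finally, span(e₂,e₄,e₅) is a 3-dimensional Abelian ideal of 𝔤_θ. -/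
import Mathlib


/-- Structure constants `c i j : Fin 5 → ℝ` (0-indexed) of the bracket of Theorem 3.3,
encoding `[e₁,e₂] = −(4/5)θe₄ − 4e₅`, `[e₁,e₄] = 2e₂`, `[e₁,e₅] = (2/5)θe₂ − 20e₄`,
`[e₂,e₃] = −2e₂`, `[e₃,e₄] = 2e₄`, `[e₃,e₅] = 2e₅`,
`[e₁,e₃] = [e₂,e₄] = [e₂,e₅] = [e₄,e₅] = 0`, together with antisymmetry. -/
noncomputable def c33 (θ : ℝ) : Fin 5 → Fin 5 → Fin 5 → ℝ :=
  ![![![0,0,0,0,0], ![0,0,0,-(4/5)*θ,-4], ![0,0,0,0,0], ![0,2,0,0,0], ![0,(2/5)*θ,0,-20,0]],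
    ![![0,0,0,(4/5)*θ,4], ![0,0,0,0,0], ![0,-2,0,0,0], ![0,0,0,0,0], ![0,0,0,0,0]],
    ![![0,0,0,0,0], ![0,2,0,0,0], ![0,0,0,0,0], ![0,0,0,2,0], ![0,0,0,0,2]],
    ![![0,-2,0,0,0], ![0,0,0,0,0], ![0,0,0,-2,0], ![0,0,0,0,0], ![0,0,0,0,0]],
    ![![0,-(2/5)*θ,0,20,0], ![0,0,0,0,0], ![0,0,0,0,-2], ![0,0,0,0,0], ![0,0,0,0,0]]]

/-- The bilinear bracket on `ℝ⁵ = Fin 5 → ℝ` determined by the structure constants `c33 θ`. -/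
noncomputable def br33 (θ : ℝ) (x y : Fin 5 → ℝ) : Fin 5 → ℝ :=
  fun k => ∑ i : Fin 5, ∑ j : Fin 5, x i * y j * c33 θ i j k

/-- The standard basis vector `eᵢ` of `ℝ⁵` (0-indexed). -/
noncomputable def e5 (i : Fin 5) : Fin 5 → ℝ := Pi.single i 1

/-- The derived algebra `[𝔤_θ,𝔤_θ]` as a submodule. -/
noncomputable def g33der (θ : ℝ) : Submodule ℝ (Fin 5 → ℝ) :=
  Submodule.span ℝ {v | ∃ x y : Fin 5 → ℝ, v = br33 θ x y}

/-- The second derived algebra `[[𝔤_θ,𝔤_θ],[𝔤_θ,𝔤_θ]]`. -/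
noncomputable def g33der2 (θ : ℝ) : Submodule ℝ (Fin 5 → ℝ) :=
  Submodule.span ℝ {v | ∃ x ∈ g33der θ, ∃ y ∈ g33der θ, v = br33 θ x y}

/-- The span of `e₂, e₄, e₅` (0-indexed: `e 1, e 3, e 4`). -/
noncomputable def a33 : Submodule ℝ (Fin 5 → ℝ) :=
  Submodule.span ℝ {e5 1, e5 3, e5 4}

/-- Closed form of the bracket. -/
lemma br33_eq (θ : ℝ) (x y : Fin 5 → ℝ) : br33 θ x y =
    ![0,
      2*(x 0 * y 3 - x 3 * y 0) + (2/5)*θ*(x 0 * y 4 - x 4 * y 0) - 2*(x 1 * y 2 - x 2 * y 1),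
      0,
      -(4/5)*θ*(x 0 * y 1 - x 1 * y 0) - 20*(x 0 * y 4 - x 4 * y 0) + 2*(x 2 * y 3 - x 3 * y 2),
      -4*(x 0 * y 1 - x 1 * y 0) + 2*(x 2 * y 4 - x 4 * y 2)] := by
  funext k
  fin_cases k <;>
    simp [br33, c33, Fin.sum_univ_five, Matrix.vecHead, Matrix.vecTail] <;> ring

/-- The submodule `{v | v 0 = 0 ∧ v 2 = 0}`. -/
noncomputable def K33 : Submodule ℝ (Fin 5 → ℝ) where
  carrier := {v | v 0 = 0 ∧ v 2 = 0}
  add_mem' := fun ha hb => ⟨by simp [ha.1, hb.1], by simp [ha.2, hb.2]⟩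
  zero_mem' := ⟨rfl, rfl⟩
  smul_mem' := fun c v hv => ⟨by simp [hv.1], by simp [hv.2]⟩

lemma mem_K33 {v : Fin 5 → ℝ} : v ∈ K33 ↔ v 0 = 0 ∧ v 2 = 0 := Iff.rfl

lemma K33_decomp {v : Fin 5 → ℝ} (h : v 0 = 0 ∧ v 2 = 0) :
    v = v 1 • e5 1 + v 3 • e5 3 + v 4 • e5 4 := by
  funext k
  fin_cases k <;> simp [e5, Pi.single_apply, h.1, h.2]

lemma a33_eq_K33 : a33 = K33 := by
  apply le_antisymm
  · rw [a33, Submodule.span_le]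
    rintro v (rfl | rfl | rfl) <;>
      exact ⟨by simp [e5, Pi.single_apply], by simp [e5, Pi.single_apply]⟩
  · intro v hv
    rw [K33_decomp hv]
    refine Submodule.add_mem _ (Submodule.add_mem _ ?_ ?_) ?_ <;>
      apply Submodule.smul_mem <;> apply Submodule.subset_span <;> simp

lemma mem_a33_iff {v : Fin 5 → ℝ} : v ∈ a33 ↔ v 0 = 0 ∧ v 2 = 0 := by
  rw [a33_eq_K33]; rfl

lemma br33_mem_a33 (θ : ℝ) (x y : Fin 5 → ℝ) : br33 θ x y ∈ a33 := by
  rw [mem_a33_iff, br33_eq]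
  exact ⟨rfl, rfl⟩

lemma br33_abelian (θ : ℝ) {x y : Fin 5 → ℝ}
    (hx : x 0 = 0 ∧ x 2 = 0) (hy : y 0 = 0 ∧ y 2 = 0) : br33 θ x y = 0 := by
  rw [br33_eq]
  funext k
  fin_cases k <;> simp [hx.1, hx.2, hy.1, hy.2]

lemma lin_indep_e134 : LinearIndependent ℝ ![e5 1, e5 3, e5 4] := by
  rw [Fintype.linearIndependent_iff]
  intro g hg i
  have h1 := congrFun hg 1
  have h3 := congrFun hg 3
  have h4 := congrFun hg 4
  simp [Fin.sum_univ_three, e5, Pi.single_apply, Matrix.vecHead, Matrix.vecTail] at h1 h3 h4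
  fin_cases i <;> assumption

lemma range_e134 : Set.range ![e5 1, e5 3, e5 4] = {e5 1, e5 3, e5 4} := by
  ext v
  constructor
  · rintro ⟨i, rfl⟩; fin_cases i <;> simp
  · rintro (rfl | rfl | rfl)
    exacts [⟨0, rfl⟩, ⟨1, rfl⟩, ⟨2, rfl⟩]

lemma finrank_a33 : Module.finrank ℝ a33 = 3 := by
  have := finrank_span_eq_card (R := ℝ) lin_indep_e134
  rw [range_e134] at this
  rw [a33, this]
  simp

/-- For every `θ ∈ ℝ`, the bracket of Theorem 3.3 is bilinear and antisymmetric, satisfies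
the Jacobi identity — hence defines a 5-dimensional real Lie algebra `𝔤_θ` — whose derived
series has dimensions 5, 3, 0: `[𝔤_θ,𝔤_θ] = span(e₂,e₄,e₅)` of dimension 3, and the second
derived algebra is zero. Moreover `span(e₂,e₄,e₅)` is a 3-dimensional Abelian ideal. -/
theorem branch_F50010_lie_algebra (θ : ℝ) :
    (∀ (a : ℝ) (x y z : Fin 5 → ℝ), br33 θ (a • x + y) z = a • br33 θ x z + br33 θ y z) ∧
    (∀ x y : Fin 5 → ℝ, br33 θ x y = - br33 θ y x) ∧
    (∀ x y z : Fin 5 → ℝ,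
      br33 θ x (br33 θ y z) + br33 θ y (br33 θ z x) + br33 θ z (br33 θ x y) = 0) ∧
    Module.finrank ℝ (Fin 5 → ℝ) = 5 ∧
    g33der θ = Submodule.span ℝ {e5 1, e5 3, e5 4} ∧
    Module.finrank ℝ (g33der θ) = 3 ∧
    g33der2 θ = ⊥ ∧
    (∀ x : Fin 5 → ℝ, ∀ a ∈ a33, br33 θ x a ∈ a33) ∧
    (∀ a ∈ a33, ∀ b ∈ a33, br33 θ a b = 0) ∧
    Module.finrank ℝ a33 = 3 := by
  have hder : g33der θ = a33 := by
    apply le_antisymm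
    · rw [g33der, Submodule.span_le]
      rintro v ⟨x, y, rfl⟩
      exact br33_mem_a33 θ x y
    · rw [a33, Submodule.span_le]
      have h1 : e5 1 = (2:ℝ)⁻¹ • br33 θ (e5 0) (e5 3) := by
        rw [br33_eq]; funext k
        fin_cases k <;> simp [e5, Pi.single_apply]
      have h3 : e5 3 = (2:ℝ)⁻¹ • br33 θ (e5 2) (e5 3) := by
        rw [br33_eq]; funext k
        fin_cases k <;> simp [e5, Pi.single_apply]
      have h4 : e5 4 = (2:ℝ)⁻¹ • br33 θ (e5 2) (e5 4) := by
        rw [br33_eq]; funext k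
        fin_cases k <;> simp [e5, Pi.single_apply]
      rintro v (rfl | rfl | rfl)
      · rw [h1]
        exact Submodule.smul_mem _ _ (Submodule.subset_span ⟨_, _, rfl⟩)
      · rw [h3]
        exact Submodule.smul_mem _ _ (Submodule.subset_span ⟨_, _, rfl⟩)
      · rw [h4]
        exact Submodule.smul_mem _ _ (Submodule.subset_span ⟨_, _, rfl⟩)
  refine ⟨?_, ?_, ?_, ?_, ?_, ?_, ?_, ?_, ?_, finrank_a33⟩
  · intro a x y z
    rw [br33_eq, br33_eq, br33_eq]
    funext k
    fin_cases k <;> simp <;> ring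
  · intro x y
    rw [br33_eq, br33_eq]
    funext k
    fin_cases k <;> simp <;> ring
  · intro x y z
    simp only [br33_eq]
    funext k
    fin_cases k <;> simp <;> ring
  · simp
  · exact hder
  · rw [hder]; exact finrank_a33
  · rw [g33der2, Submodule.span_eq_bot]
    rintro v ⟨x, hx, y, hy, rfl⟩
    rw [hder, mem_a33_iff] at hx hy
    exact br33_abelian θ hx hy
  · intro x a _
    exact br33_mem_a33 θ x a
  · intro a ha b hb
    rw [mem_a33_iff] at ha hb
    exact br33_abelian θ ha hb
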